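/- If f∈H_σ(φ), i.e., f is bi-univalent on 𝔻 with f(z)=z+a₂z²+a₃z³+⋯, g=f⁻¹, and f'≺φ, g'≺φ where φ(z)=1+B₁z+B₂z²+⋯ satisfies B₁>0, then assuming 3B₁²−4B₂+4B₁≠0, |a₂| ≤ B₁√B₁ / √|3B₁²−4B₂+4B₁|. -/

import Mathlib

/-!
Differentiating `f' = φ ∘ u` and `g' = φ ∘ v` at `0` expresses `f''(0), f'''(0), g''(0), g'''(0)`
through `B₁, B₂` and the first two derivatives of `u, v` at `0`, while `g ∘ f = id` gives
`g''(0) = -f''(0)` and `g'''(0) = 3 f''(0)² - f'''(0)`. Hence `v'(0) = -u'(0)` and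
`(3B₁² - 4B₂) f''(0)² = B₁³ (u''(0) + v''(0))`. The Schwarz–Pick bound
`|u''(0)| ≤ 2 (1 - |u'(0)|²)`, applied to `u` and `v`, and `f''(0) = B₁ u'(0)` turn this into
`|f''(0)|² (|3B₁² - 4B₂| + 4B₁) ≤ 4B₁³`, and `a₂ = f''(0) / 2`.
-/

open Metric Complex Filter Topology

/-- n-th Taylor coefficient of `f` at `0`. -/
noncomputable def tc (f : ℂ → ℂ) (n : ℕ) : ℂ := iteratedDeriv n f 0 / n.factorial

open scoped ComplexConjugate

theorem normSq_one_sub_conj_mul_sub_normSq_sub (a z : ℂ) :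
    normSq (1 - conj a * z) - normSq (z - a) = (1 - normSq a) * (1 - normSq z) := by
  simp only [normSq_apply, mul_re, mul_im, sub_re, sub_im, conj_re, conj_im, one_re, one_im]
  ring

theorem one_sub_conj_mul_ne_zero {a z : ℂ} (ha : ‖a‖ < 1) (hz : ‖z‖ < 1) : 1 - conj a * z ≠ 0 := by
  have : ‖conj a * z‖ < 1 := by
    rw [norm_mul, norm_conj]
    exact mul_lt_one_of_nonneg_of_lt_one_left (norm_nonneg a) ha hz.le
  intro h
  rw [← sub_eq_zero.mp h, norm_one] at this
  exact this.false

theorem norm_sub_div_one_sub_conj_mul_lt_one {a z : ℂ} (ha : ‖a‖ < 1) (hz : ‖z‖ < 1) :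
    ‖(z - a) / (1 - conj a * z)‖ < 1 := by
  have hden := one_sub_conj_mul_ne_zero ha hz
  rw [norm_div, div_lt_one (norm_pos_iff.mpr hden), ← sq_lt_sq₀ (norm_nonneg _) (norm_nonneg _),
    Complex.sq_norm, Complex.sq_norm, ← sub_pos, normSq_one_sub_conj_mul_sub_normSq_sub]
  have ha2 : normSq a < 1 := by rw [← Complex.sq_norm]; nlinarith [norm_nonneg a]
  have hz2 : normSq z < 1 := by rw [← Complex.sq_norm]; nlinarith [norm_nonneg z]
  exact mul_pos (by linarith) (by linarith)

theorem hasDerivAt_sub_div_one_sub_conj_mul {a : ℂ} (ha : ‖a‖ < 1) :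
    HasDerivAt (fun z => (z - a) / (1 - conj a * z)) (1 - conj a * a)⁻¹ a := by
  have hden : 1 - conj a * a ≠ 0 := one_sub_conj_mul_ne_zero ha ha
  refine (((hasDerivAt_id' a).sub_const a).fun_div
    (((hasDerivAt_id' a).const_mul (conj a)).const_sub 1) hden).congr_deriv ?_
  rw [sub_self, zero_mul, sub_zero, one_mul, sq, div_mul_cancel_right₀ hden]

theorem norm_deriv_le_one_sub_sq_of_mapsTo_ball {w : ℂ → ℂ}
    (hw : DifferentiableOn ℂ w (ball 0 1)) (hmaps : Set.MapsTo w (ball 0 1) (ball 0 1)) :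
    ‖deriv w 0‖ ≤ 1 - ‖w 0‖ ^ 2 := by
  have h0 : (0 : ℂ) ∈ ball (0 : ℂ) 1 := mem_ball_self one_pos
  set a := w 0
  have ha : ‖a‖ < 1 := mem_ball_zero_iff.mp (hmaps h0)
  have hMw : ‖deriv (fun z => (w z - a) / (1 - conj a * w z)) 0‖ ≤ 1 := by
    refine Complex.norm_deriv_le_one_of_mapsTo_ball ?_ (fun z hz => ?_) one_pos
    · exact (hw.sub_const a).div ((differentiableOn_const 1).sub (hw.const_mul _))
        fun z hz => one_sub_conj_mul_ne_zero ha (mem_ball_zero_iff.mp (hmaps hz))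
    · simpa [a] using
        (norm_sub_div_one_sub_conj_mul_lt_one ha (mem_ball_zero_iff.mp (hmaps hz))).le
  have hchain : deriv (fun z => (w z - a) / (1 - conj a * w z)) 0
      = (1 - conj a * a)⁻¹ * deriv w 0 :=
    ((hasDerivAt_sub_div_one_sub_conj_mul ha).comp 0
      (hw.differentiableAt (isOpen_ball.mem_nhds h0)).hasDerivAt).deriv
  have hnorm : ‖1 - conj a * a‖ = 1 - ‖a‖ ^ 2 := by
    rw [conj_mul', ← ofReal_pow, ← ofReal_one, ← ofReal_sub, norm_real,
      Real.norm_of_nonneg (by nlinarith [norm_nonneg a])]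
  rwa [hchain, norm_mul, norm_inv, hnorm,
    inv_mul_le_iff₀ (by nlinarith [norm_nonneg a]), mul_one] at hMw

theorem norm_deriv_le_one_sub_sq_of_mapsTo_closedBall {w : ℂ → ℂ}
    (hw : DifferentiableOn ℂ w (ball 0 1)) (hmaps : Set.MapsTo w (ball 0 1) (closedBall 0 1)) :
    ‖deriv w 0‖ ≤ 1 - ‖w 0‖ ^ 2 := by
  have hw0 : DifferentiableAt ℂ w 0 := hw.differentiableAt (ball_mem_nhds 0 one_pos)
  -- `r • w` maps the disc into the open disc for `r < 1`; then let `r → 1`.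
  have hscaled : ∀ r : ℝ, 0 < r → r < 1 → r * ‖deriv w 0‖ + r ^ 2 * ‖w 0‖ ^ 2 ≤ 1 := by
    intro r hr0 hr1
    have hrw := norm_deriv_le_one_sub_sq_of_mapsTo_ball (w := fun z => (r : ℂ) * w z)
      (hw.const_mul _) fun z hz => by
        rw [mem_ball_zero_iff, norm_mul, norm_real, Real.norm_of_nonneg hr0.le]
        exact mul_lt_one_of_nonneg_of_lt_one_left hr0.le hr1 (mem_closedBall_zero_iff.mp (hmaps hz))
    rw [deriv_const_mul _ hw0, norm_mul, norm_mul, norm_real, Real.norm_of_nonneg hr0.le] at hrw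
    linarith
  have hlim : Tendsto (fun r : ℝ => r * ‖deriv w 0‖ + r ^ 2 * ‖w 0‖ ^ 2) (𝓝[<] 1)
      (𝓝 (‖deriv w 0‖ + ‖w 0‖ ^ 2)) := by
    refine tendsto_nhdsWithin_of_tendsto_nhds ?_
    simpa using (Continuous.tendsto (by fun_prop) 1 :
      Tendsto (fun r : ℝ => r * ‖deriv w 0‖ + r ^ 2 * ‖w 0‖ ^ 2) (𝓝 1) _)
  have := le_of_tendsto hlim <| by
    filter_upwards [Ioo_mem_nhdsLT one_pos] with r hr using hscaled r hr.1 hr.2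
  linarith

theorem norm_iteratedDeriv_two_le_of_mapsTo_ball {u : ℂ → ℂ}
    (hu : DifferentiableOn ℂ u (ball 0 1)) (hmaps : Set.MapsTo u (ball 0 1) (ball 0 1))
    (hu0 : u 0 = 0) : ‖iteratedDeriv 2 u 0‖ ≤ 2 * (1 - ‖deriv u 0‖ ^ 2) := by
  -- `w = u(z) / z` maps the disc into the closed disc by the Schwarz lemma, `w 0 = u'(0)`,
  -- and `u = z w` gives `u''(0) = 2 w'(0)`.
  set w := dslope u 0
  have hw : DifferentiableOn ℂ w (ball 0 1) :=
    (differentiableOn_dslope (ball_mem_nhds 0 one_pos)).mpr hu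
  have hwmaps : Set.MapsTo w (ball 0 1) (closedBall 0 1) := fun z hz => by
    simpa using Complex.norm_dslope_le_div_of_mapsTo_ball (R₂ := 1) hu
      (fun x hx => by rw [hu0]; exact ball_subset_closedBall (hmaps hx)) hz
  have hfactor : u = fun z => z * w z := funext fun z => by
    simpa [hu0] using (sub_smul_dslope u 0 z).symm
  have hw0 : ContDiffAt ℂ 2 w 0 :=
    ((hw.analyticOnNhd isOpen_ball) 0 (mem_ball_self one_pos)).contDiffAt
  have h2 : iteratedDeriv 2 u 0 = 2 * deriv w 0 := by
    rw [hfactor, iteratedDeriv_fun_mul contDiffAt_fun_id hw0]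
    simp [iteratedDeriv_fun_id_zero]
  rw [h2, norm_mul, ← dslope_same u 0]
  have := norm_deriv_le_one_sub_sq_of_mapsTo_closedBall hw hwmaps
  simp only [Complex.norm_ofNat]
  linarith

section IteratedDeriv

variable {𝕜 : Type*} [NontriviallyNormedField 𝕜] {f g p q : 𝕜 → 𝕜} {x y : 𝕜}

theorem iteratedDeriv_two_of_deriv_eventuallyEq_comp (h : deriv f =ᶠ[𝓝 x] p ∘ q)
    (hp : DifferentiableAt 𝕜 p y) (hq : DifferentiableAt 𝕜 q x) (hy : q x = y) :
    iteratedDeriv 2 f x = deriv p y * deriv q x := by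
  subst hy
  rw [iteratedDeriv_succ', iteratedDeriv_one, h.deriv_eq, deriv_comp x hp hq]

theorem iteratedDeriv_three_of_deriv_eventuallyEq_comp (h : deriv f =ᶠ[𝓝 x] p ∘ q)
    (hp : ContDiffAt 𝕜 2 p y) (hq : ContDiffAt 𝕜 2 q x) (hy : q x = y) :
    iteratedDeriv 3 f x =
      iteratedDeriv 2 p y * deriv q x ^ 2 + deriv p y * iteratedDeriv 2 q x := by
  subst hy
  rw [iteratedDeriv_succ', (h.iteratedDeriv 2).eq_of_nhds, iteratedDeriv_comp_two hp hq]

theorem deriv_eq_one_of_comp_eventuallyEq_id (hgf : g ∘ f =ᶠ[𝓝 x] id) (hf1 : deriv f x = 1)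
    (hg : DifferentiableAt 𝕜 g y) (hf : DifferentiableAt 𝕜 f x) (hy : f x = y) :
    deriv g y = 1 := by
  subst hy
  simpa [deriv_comp x hg hf, hf1] using hgf.deriv_eq

theorem iteratedDeriv_two_of_comp_eventuallyEq_id (hgf : g ∘ f =ᶠ[𝓝 x] id)
    (hf1 : deriv f x = 1) (hg : ContDiffAt 𝕜 2 g y) (hf : ContDiffAt 𝕜 2 f x) (hy : f x = y) :
    iteratedDeriv 2 g y = -iteratedDeriv 2 f x := by
  have h := (hgf.iteratedDeriv 2).eq_of_nhds
  rw [iteratedDeriv_comp_two (hy ▸ hg) hf, hy, hf1, deriv_eq_one_of_comp_eventuallyEq_id hgf hf1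
      (hg.differentiableAt two_ne_zero) (hf.differentiableAt two_ne_zero) hy,
    iteratedDeriv_id, if_neg two_ne_zero, if_neg (by norm_num)] at h
  linear_combination h

theorem iteratedDeriv_three_of_comp_eventuallyEq_id (hgf : g ∘ f =ᶠ[𝓝 x] id)
    (hf1 : deriv f x = 1) (hg : ContDiffAt 𝕜 3 g y) (hf : ContDiffAt 𝕜 3 f x) (hy : f x = y) :
    iteratedDeriv 3 g y = 3 * iteratedDeriv 2 f x ^ 2 - iteratedDeriv 3 f x := by
  have h := (hgf.iteratedDeriv 3).eq_of_nhds
  rw [iteratedDeriv_comp_three (hy ▸ hg) hf, hy, hf1, deriv_eq_one_of_comp_eventuallyEq_id hgf hf1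
      (hg.differentiableAt (by norm_num)) (hf.differentiableAt (by norm_num)) hy,
    iteratedDeriv_two_of_comp_eventuallyEq_id hgf hf1 (hg.of_le (by norm_num))
      (hf.of_le (by norm_num)) hy,
    iteratedDeriv_id, if_neg three_ne_zero, if_neg (by norm_num)] at h
  linear_combination h

end IteratedDeriv

theorem tc_one (f : ℂ → ℂ) : tc f 1 = deriv f 0 := by
  simp [tc]

theorem tc_two (f : ℂ → ℂ) : tc f 2 = iteratedDeriv 2 f 0 / 2 := by
  simp [tc]

theorem norm_sq_mul_abs_le_of_bi_subordinate {B₁ B₂ : ℝ} {D₂ D₃ c d p q : ℂ} (hB₁ : 0 < B₁)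
    (hf₂ : D₂ = B₁ * c) (hf₃ : D₃ = 2 * B₂ * c ^ 2 + B₁ * p)
    (hg₂ : -D₂ = B₁ * d) (hg₃ : 3 * D₂ ^ 2 - D₃ = 2 * B₂ * d ^ 2 + B₁ * q)
    (hp : ‖p‖ ≤ 2 * (1 - ‖c‖ ^ 2)) (hq : ‖q‖ ≤ 2 * (1 - ‖d‖ ^ 2)) :
    ‖D₂‖ ^ 2 * |3 * B₁ ^ 2 - 4 * B₂ + 4 * B₁| ≤ 4 * B₁ ^ 3 := by
  have hd : d = -c :=
    mul_left_cancel₀ (ofReal_ne_zero.mpr hB₁.ne') (by linear_combination -hg₂ - hf₂)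
  subst hd
  have hsum : D₂ ^ 2 * ((3 * B₁ ^ 2 - 4 * B₂ : ℝ) : ℂ) = ((B₁ ^ 3 : ℝ) : ℂ) * (p + q) := by
    push_cast
    linear_combination (B₁ : ℂ) ^ 2 * hf₃ + (B₁ : ℂ) ^ 2 * hg₃ - 4 * B₂ * (D₂ + B₁ * c) * hf₂
  have hnorm : ‖D₂‖ ^ 2 * |3 * B₁ ^ 2 - 4 * B₂| ≤ B₁ ^ 3 * (4 - 4 * ‖c‖ ^ 2) := by
    have := congrArg norm hsum
    rw [norm_mul, norm_mul, norm_pow, norm_real, norm_real, Real.norm_eq_abs,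
      Real.norm_of_nonneg (by positivity)] at this
    rw [this]
    gcongr
    calc ‖p + q‖ ≤ ‖p‖ + ‖q‖ := norm_add_le p q
      _ ≤ 4 - 4 * ‖c‖ ^ 2 := by rw [norm_neg] at hq; linarith
  have hc : ‖D₂‖ = B₁ * ‖c‖ := by rw [hf₂, norm_mul, norm_real, Real.norm_of_nonneg hB₁.le]
  have habs : |3 * B₁ ^ 2 - 4 * B₂ + 4 * B₁| ≤ |3 * B₁ ^ 2 - 4 * B₂| + 4 * B₁ :=
    (abs_add_le _ _).trans_eq (by rw [abs_of_pos (by positivity : (0 : ℝ) < 4 * B₁)])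
  calc ‖D₂‖ ^ 2 * |3 * B₁ ^ 2 - 4 * B₂ + 4 * B₁|
      ≤ ‖D₂‖ ^ 2 * (|3 * B₁ ^ 2 - 4 * B₂| + 4 * B₁) := by gcongr
    _ ≤ 4 * B₁ ^ 3 := by rw [hc] at hnorm ⊢; nlinarith

theorem le_mul_sqrt_div_sqrt_of_sq_mul_le {x B D : ℝ} (hx : 0 ≤ x) (hB : 0 ≤ B) (hD : 0 < D)
    (h : x ^ 2 * D ≤ B ^ 3) : x ≤ B * √B / √D := by
  rw [le_div_iff₀ (Real.sqrt_pos.mpr hD),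
    ← pow_le_pow_iff_left₀ (by positivity) (by positivity) two_ne_zero, mul_pow, mul_pow,
    Real.sq_sqrt hD.le, Real.sq_sqrt hB]
  linarith

theorem stmt9_general (f g u v φ : ℂ → ℂ) (B₁ B₂ : ℝ)
    (hf : AnalyticOn ℂ f (ball (0:ℂ) 1))
    (hf0 : f 0 = 0) (hf1 : deriv f 0 = 1)
    (hg : AnalyticOn ℂ g (ball (0:ℂ) 1))
    (hinv : ∀ᶠ z in 𝓝 (0:ℂ), g (f z) = z)
    (hu : AnalyticOn ℂ u (ball (0:ℂ) 1)) (humap : ∀ z ∈ ball (0:ℂ) 1, u z ∈ ball (0:ℂ) 1) (hu0 : u 0 = 0)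
    (hv : AnalyticOn ℂ v (ball (0:ℂ) 1)) (hvmap : ∀ w ∈ ball (0:ℂ) 1, v w ∈ ball (0:ℂ) 1) (hv0 : v 0 = 0)
    (hφ : AnalyticOn ℂ φ (ball (0:ℂ) 1))
    (hB₁ : tc φ 1 = (B₁ : ℂ)) (hB₂ : tc φ 2 = (B₂ : ℂ)) (hB₁pos : 0 < B₁)
    (hfu : ∀ z ∈ ball (0:ℂ) 1, deriv f z = φ (u z))
    (hgv : ∀ w ∈ ball (0:ℂ) 1, deriv g w = φ (v w))
    (hne : 3 * B₁ ^ 2 - 4 * B₂ + 4 * B₁ ≠ 0) :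
    ‖tc f 2‖ ≤ B₁ * Real.sqrt B₁ / Real.sqrt |3 * B₁ ^ 2 - 4 * B₂ + 4 * B₁| := by
  have h0 : ball (0:ℂ) 1 ∈ 𝓝 0 := ball_mem_nhds 0 one_pos
  have hφ₁ : deriv φ 0 = B₁ := by rw [← tc_one, hB₁]
  have hφ₂ : iteratedDeriv 2 φ 0 = 2 * B₂ := by
    rw [← mul_div_cancel₀ (iteratedDeriv 2 φ 0) two_ne_zero, ← tc_two, hB₂]
  have hfu' : deriv f =ᶠ[𝓝 0] φ ∘ u := eventually_of_mem h0 hfu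
  have hgv' : deriv g =ᶠ[𝓝 0] φ ∘ v := eventually_of_mem h0 hgv
  have hf₂ := iteratedDeriv_two_of_deriv_eventuallyEq_comp hfu'
    (hφ.analyticAt h0).differentiableAt (hu.analyticAt h0).differentiableAt hu0
  have hf₃ := iteratedDeriv_three_of_deriv_eventuallyEq_comp hfu'
    (hφ.analyticAt h0).contDiffAt (hu.analyticAt h0).contDiffAt hu0
  have hg₂ := iteratedDeriv_two_of_deriv_eventuallyEq_comp hgv'
    (hφ.analyticAt h0).differentiableAt (hv.analyticAt h0).differentiableAt hv0
  have hg₃ := iteratedDeriv_three_of_deriv_eventuallyEq_comp hgv'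
    (hφ.analyticAt h0).contDiffAt (hv.analyticAt h0).contDiffAt hv0
  have hinv₂ := iteratedDeriv_two_of_comp_eventuallyEq_id hinv hf1
    (hg.analyticAt h0).contDiffAt (hf.analyticAt h0).contDiffAt hf0
  have hinv₃ := iteratedDeriv_three_of_comp_eventuallyEq_id hinv hf1
    (hg.analyticAt h0).contDiffAt (hf.analyticAt h0).contDiffAt hf0
  rw [hφ₁] at hf₂ hg₂
  rw [hφ₁, hφ₂] at hf₃ hg₃
  rw [hinv₂] at hg₂
  rw [hinv₃] at hg₃
  have key := norm_sq_mul_abs_le_of_bi_subordinate hB₁pos hf₂ hf₃ hg₂ hg₃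
    (norm_iteratedDeriv_two_le_of_mapsTo_ball hu.differentiableOn humap hu0)
    (norm_iteratedDeriv_two_le_of_mapsTo_ball hv.differentiableOn hvmap hv0)
  refine le_mul_sqrt_div_sqrt_of_sq_mul_le (norm_nonneg _) hB₁pos.le (abs_pos.mpr hne) ?_
  rw [tc_two, norm_div, Complex.norm_ofNat]
  linarith

theorem stmt9 (f g u v φ : ℂ → ℂ) (B₁ B₂ : ℝ)
    (hf : AnalyticOn ℂ f (ball (0:ℂ) 1)) (hfinj : Set.InjOn f (ball (0:ℂ) 1))
    (hf0 : f 0 = 0) (hf1 : deriv f 0 = 1)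
    (hg : AnalyticOn ℂ g (ball (0:ℂ) 1)) (hginj : Set.InjOn g (ball (0:ℂ) 1))
    (hinv : ∀ᶠ z in 𝓝 (0:ℂ), g (f z) = z)
    (hu : AnalyticOn ℂ u (ball (0:ℂ) 1)) (humap : ∀ z ∈ ball (0:ℂ) 1, u z ∈ ball (0:ℂ) 1) (hu0 : u 0 = 0)
    (hv : AnalyticOn ℂ v (ball (0:ℂ) 1)) (hvmap : ∀ w ∈ ball (0:ℂ) 1, v w ∈ ball (0:ℂ) 1) (hv0 : v 0 = 0)
    (hφ : AnalyticOn ℂ φ (ball (0:ℂ) 1)) (hφ0 : φ 0 = 1)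
    (hB₁ : tc φ 1 = (B₁ : ℂ)) (hB₂ : tc φ 2 = (B₂ : ℂ)) (hB₁pos : 0 < B₁)
    (hfu : ∀ z ∈ ball (0:ℂ) 1, deriv f z = φ (u z))
    (hgv : ∀ w ∈ ball (0:ℂ) 1, deriv g w = φ (v w))
    (hne : 3 * B₁ ^ 2 - 4 * B₂ + 4 * B₁ ≠ 0) :
    ‖tc f 2‖ ≤ B₁ * Real.sqrt B₁ / Real.sqrt |3 * B₁ ^ 2 - 4 * B₂ + 4 * B₁| :=
  stmt9_general f g u v φ B₁ B₂ hf hf0 hf1 hg hinv hu humap hu0 hv hvmap hv0 hφ hB₁ hB₂ hB₁pos hfu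
    hgv hne
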